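/- In the three-gambler ruin game with total capital K, probabilities p₁,p₂,p₃ ∈ (0,1), and any stationary strategy profile x with values in [0,1], every interior state communicates with all three terminal states: for every interior state s and every terminal state τ ∈ {(K,0,0), (0,K,0), (0,0,K)} there exists t ≥ 1 such that the (s,τ) entry of the t-th power Pᵗ of the transition matrix is strictly positive. -/
import Mathlib


open Filter Topology Matrix

/-- The state set of the three-gambler ruin game with total capital `K`. -/
abbrev GState (K : ℕ) : Type := {s : ℕ × ℕ × ℕ // s.1 + s.2.1 + s.2.2 = K}

instance GState.finite (K : ℕ) : Finite (GState K) := by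
  apply Finite.of_injective
    (fun s : GState K =>
      ((⟨s.val.1, by have := s.2; omega⟩ : Fin (K + 1)),
       (⟨s.val.2.1, by have := s.2; omega⟩ : Fin (K + 1)),
       (⟨s.val.2.2, by have := s.2; omega⟩ : Fin (K + 1))))
  intro a b h
  simp only [Prod.mk.injEq, Fin.mk.injEq] at h
  apply Subtype.ext
  exact Prod.ext h.1 (Prod.ext h.2.1 h.2.2)

noncomputable instance GState.fintype (K : ℕ) : Fintype (GState K) :=
  Fintype.ofFinite _

/-- A state is terminal iff two of its coordinates vanish (i.e. it is one of
`(K,0,0)`, `(0,K,0)`, `(0,0,K)`). -/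
def GState.terminal {K : ℕ} (s : GState K) : Prop :=
  (s.val.2.1 = 0 ∧ s.val.2.2 = 0) ∨ (s.val.1 = 0 ∧ s.val.2.2 = 0) ∨
    (s.val.1 = 0 ∧ s.val.2.1 = 0)

instance {K : ℕ} (s : GState K) : Decidable s.terminal := by
  unfold GState.terminal; infer_instance

/-- The transition matrix of the three-gambler ruin game with total capital `K`,
winning probabilities `p₁, p₂, p₃`, and stationary strategy profile
`(x₁, x₂, x₃)` (defined on interior states). -/
noncomputable def gTrans (K : ℕ) (p₁ p₂ p₃ : ℝ) (x₁ x₂ x₃ : ℕ × ℕ × ℕ → ℝ) :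
    Matrix (GState K) (GState K) ℝ := fun s s' =>
  let a := s.val.1
  let b := s.val.2.1
  let c := s.val.2.2
  if s.terminal then
    -- terminal states are absorbing
    (if s' = s then 1 else 0)
  else if c = 0 then
    -- boundary state (a, b, 0) with a, b > 0 : P₁ and P₂ play each other
    (if s'.val = (a + 1, b - 1, 0) then p₁
     else if s'.val = (a - 1, b + 1, 0) then 1 - p₁ else 0)
  else if a = 0 then
    -- boundary state (0, b, c) with b, c > 0 : P₂ and P₃ play each other
    (if s'.val = (0, b + 1, c - 1) then p₂
     else if s'.val = (0, b - 1, c + 1) then 1 - p₂ else 0)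
  else if b = 0 then
    -- boundary state (a, 0, c) with a, c > 0 : P₃ and P₁ play each other
    (if s'.val = (a - 1, 0, c + 1) then p₃
     else if s'.val = (a + 1, 0, c - 1) then 1 - p₃ else 0)
  else
    -- interior state
    (if s'.val = (a + 1, b - 1, c) then (x₁ s.val + 1 - x₂ s.val) * p₁ / 3
     else if s'.val = (a - 1, b + 1, c) then (x₁ s.val + 1 - x₂ s.val) * (1 - p₁) / 3
     else if s'.val = (a, b + 1, c - 1) then (x₂ s.val + 1 - x₃ s.val) * p₂ / 3
     else if s'.val = (a, b - 1, c + 1) then (x₂ s.val + 1 - x₃ s.val) * (1 - p₂) / 3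
     else if s'.val = (a - 1, b, c + 1) then (x₃ s.val + 1 - x₁ s.val) * p₃ / 3
     else if s'.val = (a + 1, b, c - 1) then (x₃ s.val + 1 - x₁ s.val) * (1 - p₃) / 3
     else 0)


section Aux

lemma ite_nn {q : Prop} [Decidable q] {u v : ℝ} (hu : 0 ≤ u) (hv : 0 ≤ v) :
    0 ≤ if q then u else v := by
  by_cases h : q
  · rwa [if_pos h]
  · rwa [if_neg h]

lemma pow_entry_nonneg {n : Type*} [Fintype n] [DecidableEq n]
    {P : Matrix n n ℝ} (hnn : ∀ s s', 0 ≤ P s s') (t : ℕ) (s s' : n) :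
    0 ≤ (P ^ t) s s' := by
  induction t generalizing s s' with
  | zero =>
    rw [pow_zero, Matrix.one_apply]
    split_ifs <;> norm_num
  | succ t ih =>
    rw [pow_succ, Matrix.mul_apply]
    exact Finset.sum_nonneg fun u _ => mul_nonneg (ih s u) (hnn u s')

lemma pow_entry_pos_step {n : Type*} [Fintype n] [DecidableEq n]
    {P : Matrix n n ℝ} (hnn : ∀ s s', 0 ≤ P s s') {s u τ : n} {t : ℕ}
    (h1 : 0 < P s u) (h2 : 0 < (P ^ t) u τ) : 0 < (P ^ (t + 1)) s τ := by
  rw [pow_succ', Matrix.mul_apply]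
  exact Finset.sum_pos'
    (fun v _ => mul_nonneg (hnn s v) (pow_entry_nonneg hnn t v τ))
    ⟨u, Finset.mem_univ u, mul_pos h1 h2⟩

variable {K : ℕ} {p₁ p₂ p₃ : ℝ}
  (hp₁ : p₁ ∈ Set.Ioo (0:ℝ) 1) (hp₂ : p₂ ∈ Set.Ioo (0:ℝ) 1) (hp₃ : p₃ ∈ Set.Ioo (0:ℝ) 1)
  {x₁ x₂ x₃ : ℕ × ℕ × ℕ → ℝ}
  (hx : ∀ s : ℕ × ℕ × ℕ, 0 < s.1 → 0 < s.2.1 → 0 < s.2.2 →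
      x₁ s ∈ Set.Icc (0 : ℝ) 1 ∧ x₂ s ∈ Set.Icc (0 : ℝ) 1 ∧ x₃ s ∈ Set.Icc (0 : ℝ) 1)

include hp₁ hp₂ hp₃ hx

set_option maxHeartbeats 1600000 in
lemma gTrans_nonneg (s s' : GState K) : 0 ≤ gTrans K p₁ p₂ p₃ x₁ x₂ x₃ s s' := by
  obtain ⟨⟨a, b, c⟩, hs⟩ := s
  obtain ⟨hq1, hq1'⟩ := hp₁
  obtain ⟨hq2, hq2'⟩ := hp₂
  obtain ⟨hq3, hq3'⟩ := hp₃
  simp only [gTrans]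
  by_cases h1 : GState.terminal (⟨(a, b, c), hs⟩ : GState K)
  · rw [if_pos h1]
    exact ite_nn zero_le_one le_rfl
  rw [if_neg h1]
  split_ifs
  all_goals try norm_num
  all_goals try linarith
  all_goals {
    obtain ⟨⟨hx1, hx1'⟩, ⟨hx2, hx2'⟩, ⟨hx3, hx3'⟩⟩ :=
      hx (a, b, c) (show 0 < a by omega) (show 0 < b by omega) (show 0 < c by omega)
    apply div_nonneg _ (by norm_num : (0:ℝ) ≤ 3)
    apply mul_nonneg <;> linarith
  }

set_option maxHeartbeats 1600000 in
lemma stepA (s : GState K) (ha : 0 < s.val.1)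
    (hbc : 0 < s.val.2.1 ∨ 0 < s.val.2.2) :
    ∃ s' : GState K, s'.val.1 = s.val.1 + 1 ∧
      0 < gTrans K p₁ p₂ p₃ x₁ x₂ x₃ s s' := by
  obtain ⟨⟨a, b, c⟩, hs⟩ := s
  have hs' : a + b + c = K := hs
  replace ha : 0 < a := ha
  replace hbc : 0 < b ∨ 0 < c := hbc
  have hnt : ¬ GState.terminal (⟨(a, b, c), hs⟩ : GState K) := by
    simp only [GState.terminal]
    omega
  by_cases hb : b = 0
  · have hc : 0 < c := by omega
    refine ⟨⟨(a + 1, 0, c - 1), show (a + 1) + 0 + (c - 1) = K by omega⟩, rfl, ?_⟩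
    simp only [gTrans]
    rw [if_neg hnt]
    split_ifs <;>
      first
      | linarith [hp₁.1, hp₁.2, hp₂.1, hp₂.2, hp₃.1, hp₃.2]
      | (exact div_pos (mul_pos (by linarith) (by linarith [hp₁.1, hp₁.2, hp₂.1, hp₂.2, hp₃.1, hp₃.2])) (by norm_num))
      | (exfalso; simp only [Prod.mk.injEq] at *; omega)
  · have hb' : 0 < b := by omega
    by_cases hc : c = 0
    · -- boundary (a, b, 0)
      refine ⟨⟨(a + 1, b - 1, 0), show (a + 1) + (b - 1) + 0 = K by omega⟩, rfl, ?_⟩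
      simp only [gTrans]
      rw [if_neg hnt]
      split_ifs <;>
        first
        | linarith [hp₁.1, hp₁.2, hp₂.1, hp₂.2, hp₃.1, hp₃.2]
        | (exact div_pos (mul_pos (by linarith) (by linarith [hp₁.1, hp₁.2, hp₂.1, hp₂.2, hp₃.1, hp₃.2])) (by norm_num))
        | (exfalso; simp only [Prod.mk.injEq] at *; omega)
    · have hc' : 0 < c := by omega
      obtain ⟨⟨hx1, hx1'⟩, ⟨hx2, hx2'⟩, ⟨hx3, hx3'⟩⟩ := hx (a, b, c) ha hb' hc'
      have hw : 0 < x₁ (a, b, c) + 1 - x₂ (a, b, c) ∨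
          0 < x₃ (a, b, c) + 1 - x₁ (a, b, c) := by
        by_contra h; push_neg at h; linarith [h.1, h.2]
      rcases hw with hw | hw
      · -- move (a+1, b-1, c)
        refine ⟨⟨(a + 1, b - 1, c), show (a + 1) + (b - 1) + c = K by omega⟩, rfl, ?_⟩
        simp only [gTrans]
        rw [if_neg hnt]
        split_ifs <;>
          first
          | linarith [hp₁.1, hp₁.2, hp₂.1, hp₂.2, hp₃.1, hp₃.2]
          | (exact div_pos (mul_pos (by linarith) (by linarith [hp₁.1, hp₁.2, hp₂.1, hp₂.2, hp₃.1, hp₃.2])) (by norm_num))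
          | (exfalso; simp only [Prod.mk.injEq] at *; omega)
      · -- move (a+1, b, c-1)
        refine ⟨⟨(a + 1, b, c - 1), show (a + 1) + b + (c - 1) = K by omega⟩, rfl, ?_⟩
        simp only [gTrans]
        rw [if_neg hnt]
        split_ifs <;>
          first
          | linarith [hp₁.1, hp₁.2, hp₂.1, hp₂.2, hp₃.1, hp₃.2]
          | (exact div_pos (mul_pos (by linarith) (by linarith [hp₁.1, hp₁.2, hp₂.1, hp₂.2, hp₃.1, hp₃.2])) (by norm_num))
          | (exfalso; simp only [Prod.mk.injEq] at *; omega)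

set_option maxHeartbeats 1600000 in
lemma stepB (s : GState K) (hb : 0 < s.val.2.1)
    (hac : 0 < s.val.1 ∨ 0 < s.val.2.2) :
    ∃ s' : GState K, s'.val.2.1 = s.val.2.1 + 1 ∧
      0 < gTrans K p₁ p₂ p₃ x₁ x₂ x₃ s s' := by
  obtain ⟨⟨a, b, c⟩, hs⟩ := s
  have hs' : a + b + c = K := hs
  replace hb : 0 < b := hb
  replace hac : 0 < a ∨ 0 < c := hac
  have hnt : ¬ GState.terminal (⟨(a, b, c), hs⟩ : GState K) := by
    simp only [GState.terminal]
    omega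
  by_cases ha : a = 0
  · have hc : 0 < c := by omega
    refine ⟨⟨(0, b + 1, c - 1), show 0 + (b + 1) + (c - 1) = K by omega⟩, rfl, ?_⟩
    simp only [gTrans]
    rw [if_neg hnt]
    split_ifs <;>
      first
      | linarith [hp₁.1, hp₁.2, hp₂.1, hp₂.2, hp₃.1, hp₃.2]
      | (exact div_pos (mul_pos (by linarith) (by linarith [hp₁.1, hp₁.2, hp₂.1, hp₂.2, hp₃.1, hp₃.2])) (by norm_num))
      | (exfalso; simp only [Prod.mk.injEq] at *; omega)
  · have ha' : 0 < a := by omega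
    by_cases hc : c = 0
    · -- boundary (a, b, 0)
      refine ⟨⟨(a - 1, b + 1, 0), show (a - 1) + (b + 1) + 0 = K by omega⟩, rfl, ?_⟩
      simp only [gTrans]
      rw [if_neg hnt]
      split_ifs <;>
        first
        | linarith [hp₁.1, hp₁.2, hp₂.1, hp₂.2, hp₃.1, hp₃.2]
        | (exact div_pos (mul_pos (by linarith) (by linarith [hp₁.1, hp₁.2, hp₂.1, hp₂.2, hp₃.1, hp₃.2])) (by norm_num))
        | (exfalso; simp only [Prod.mk.injEq] at *; omega)
    · have hc' : 0 < c := by omega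
      obtain ⟨⟨hx1, hx1'⟩, ⟨hx2, hx2'⟩, ⟨hx3, hx3'⟩⟩ := hx (a, b, c) ha' hb hc'
      have hw : 0 < x₁ (a, b, c) + 1 - x₂ (a, b, c) ∨
          0 < x₂ (a, b, c) + 1 - x₃ (a, b, c) := by
        by_contra h; push_neg at h; linarith [h.1, h.2]
      rcases hw with hw | hw
      · -- move (a-1, b+1, c)
        refine ⟨⟨(a - 1, b + 1, c), show (a - 1) + (b + 1) + c = K by omega⟩, rfl, ?_⟩
        simp only [gTrans]
        rw [if_neg hnt]
        split_ifs <;>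
          first
          | linarith [hp₁.1, hp₁.2, hp₂.1, hp₂.2, hp₃.1, hp₃.2]
          | (exact div_pos (mul_pos (by linarith) (by linarith [hp₁.1, hp₁.2, hp₂.1, hp₂.2, hp₃.1, hp₃.2])) (by norm_num))
          | (exfalso; simp only [Prod.mk.injEq] at *; omega)
      · -- move (a, b+1, c-1)
        refine ⟨⟨(a, b + 1, c - 1), show a + (b + 1) + (c - 1) = K by omega⟩, rfl, ?_⟩
        simp only [gTrans]
        rw [if_neg hnt]
        split_ifs <;>
          first
          | linarith [hp₁.1, hp₁.2, hp₂.1, hp₂.2, hp₃.1, hp₃.2]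
          | (exact div_pos (mul_pos (by linarith) (by linarith [hp₁.1, hp₁.2, hp₂.1, hp₂.2, hp₃.1, hp₃.2])) (by norm_num))
          | (exfalso; simp only [Prod.mk.injEq] at *; omega)

set_option maxHeartbeats 1600000 in
lemma stepC (s : GState K) (hc : 0 < s.val.2.2)
    (hab : 0 < s.val.1 ∨ 0 < s.val.2.1) :
    ∃ s' : GState K, s'.val.2.2 = s.val.2.2 + 1 ∧
      0 < gTrans K p₁ p₂ p₃ x₁ x₂ x₃ s s' := by
  obtain ⟨⟨a, b, c⟩, hs⟩ := s
  have hs' : a + b + c = K := hs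
  replace hc : 0 < c := hc
  replace hab : 0 < a ∨ 0 < b := hab
  have hnt : ¬ GState.terminal (⟨(a, b, c), hs⟩ : GState K) := by
    simp only [GState.terminal]
    omega
  by_cases ha : a = 0
  · have hb : 0 < b := by omega
    refine ⟨⟨(0, b - 1, c + 1), show 0 + (b - 1) + (c + 1) = K by omega⟩, rfl, ?_⟩
    simp only [gTrans]
    rw [if_neg hnt]
    split_ifs <;>
      first
      | linarith [hp₁.1, hp₁.2, hp₂.1, hp₂.2, hp₃.1, hp₃.2]
      | (exact div_pos (mul_pos (by linarith) (by linarith [hp₁.1, hp₁.2, hp₂.1, hp₂.2, hp₃.1, hp₃.2])) (by norm_num))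
      | (exfalso; simp only [Prod.mk.injEq] at *; omega)
  · have ha' : 0 < a := by omega
    by_cases hb : b = 0
    · -- boundary (a, 0, c)
      refine ⟨⟨(a - 1, 0, c + 1), show (a - 1) + 0 + (c + 1) = K by omega⟩, rfl, ?_⟩
      simp only [gTrans]
      rw [if_neg hnt]
      split_ifs <;>
        first
        | linarith [hp₁.1, hp₁.2, hp₂.1, hp₂.2, hp₃.1, hp₃.2]
        | (exact div_pos (mul_pos (by linarith) (by linarith [hp₁.1, hp₁.2, hp₂.1, hp₂.2, hp₃.1, hp₃.2])) (by norm_num))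
        | (exfalso; simp only [Prod.mk.injEq] at *; omega)
    · have hb' : 0 < b := by omega
      obtain ⟨⟨hx1, hx1'⟩, ⟨hx2, hx2'⟩, ⟨hx3, hx3'⟩⟩ := hx (a, b, c) ha' hb' hc
      have hw : 0 < x₂ (a, b, c) + 1 - x₃ (a, b, c) ∨
          0 < x₃ (a, b, c) + 1 - x₁ (a, b, c) := by
        by_contra h; push_neg at h; linarith [h.1, h.2]
      rcases hw with hw | hw
      · -- move (a, b-1, c+1)
        refine ⟨⟨(a, b - 1, c + 1), show a + (b - 1) + (c + 1) = K by omega⟩, rfl, ?_⟩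
        simp only [gTrans]
        rw [if_neg hnt]
        split_ifs <;>
          first
          | linarith [hp₁.1, hp₁.2, hp₂.1, hp₂.2, hp₃.1, hp₃.2]
          | (exact div_pos (mul_pos (by linarith) (by linarith [hp₁.1, hp₁.2, hp₂.1, hp₂.2, hp₃.1, hp₃.2])) (by norm_num))
          | (exfalso; simp only [Prod.mk.injEq] at *; omega)
      · -- move (a-1, b, c+1)
        refine ⟨⟨(a - 1, b, c + 1), show (a - 1) + b + (c + 1) = K by omega⟩, rfl, ?_⟩
        simp only [gTrans]
        rw [if_neg hnt]
        split_ifs <;>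
          first
          | linarith [hp₁.1, hp₁.2, hp₂.1, hp₂.2, hp₃.1, hp₃.2]
          | (exact div_pos (mul_pos (by linarith) (by linarith [hp₁.1, hp₁.2, hp₂.1, hp₂.2, hp₃.1, hp₃.2])) (by norm_num))
          | (exfalso; simp only [Prod.mk.injEq] at *; omega)

lemma reachA (n : ℕ) : ∀ s : GState K, s.val.1 + n = K → 1 ≤ n → 0 < s.val.1 →
    ∀ τ : GState K, τ.val = (K, 0, 0) →
      ∃ t : ℕ, 1 ≤ t ∧ 0 < ((gTrans K p₁ p₂ p₃ x₁ x₂ x₃) ^ t) s τ := by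
  induction n with
  | zero => omega
  | succ n ih =>
    intro s hsum hn hpos τ hτ
    have hother : 0 < s.val.2.1 ∨ 0 < s.val.2.2 := by have := s.2; omega
    obtain ⟨s', hs'1, hs'pos⟩ := stepA hp₁ hp₂ hp₃ hx s hpos hother
    rcases Nat.eq_zero_or_pos n with hn0 | hn1
    · subst hn0
      have hval : s'.val = (K, 0, 0) := by
        have e1 : s'.val.1 = s.val.1 + 1 := hs'1
        have e2 : s'.val.1 + s'.val.2.1 + s'.val.2.2 = K := s'.2
        have e3 : s'.val = (s'.val.1, s'.val.2.1, s'.val.2.2) := rfl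
        rw [e3]
        simp only [Prod.mk.injEq]
        omega
      have hst : s' = τ := Subtype.ext (by rw [hτ, hval])
      refine ⟨1, le_refl 1, ?_⟩
      rw [pow_one, ← hst]
      exact hs'pos
    · obtain ⟨t, ht1, htpos⟩ := ih s' (by have := s'.2; omega) hn1 (by omega) τ hτ
      exact ⟨t + 1, by omega,
        pow_entry_pos_step (gTrans_nonneg hp₁ hp₂ hp₃ hx) hs'pos htpos⟩

lemma reachB (n : ℕ) : ∀ s : GState K, s.val.2.1 + n = K → 1 ≤ n → 0 < s.val.2.1 →
    ∀ τ : GState K, τ.val = (0, K, 0) →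
      ∃ t : ℕ, 1 ≤ t ∧ 0 < ((gTrans K p₁ p₂ p₃ x₁ x₂ x₃) ^ t) s τ := by
  induction n with
  | zero => omega
  | succ n ih =>
    intro s hsum hn hpos τ hτ
    have hother : 0 < s.val.1 ∨ 0 < s.val.2.2 := by have := s.2; omega
    obtain ⟨s', hs'1, hs'pos⟩ := stepB hp₁ hp₂ hp₃ hx s hpos hother
    rcases Nat.eq_zero_or_pos n with hn0 | hn1
    · subst hn0
      have hval : s'.val = (0, K, 0) := by
        have e1 : s'.val.2.1 = s.val.2.1 + 1 := hs'1
        have e2 : s'.val.1 + s'.val.2.1 + s'.val.2.2 = K := s'.2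
        have e3 : s'.val = (s'.val.1, s'.val.2.1, s'.val.2.2) := rfl
        rw [e3]
        simp only [Prod.mk.injEq]
        omega
      have hst : s' = τ := Subtype.ext (by rw [hτ, hval])
      refine ⟨1, le_refl 1, ?_⟩
      rw [pow_one, ← hst]
      exact hs'pos
    · obtain ⟨t, ht1, htpos⟩ := ih s' (by have := s'.2; omega) hn1 (by omega) τ hτ
      exact ⟨t + 1, by omega,
        pow_entry_pos_step (gTrans_nonneg hp₁ hp₂ hp₃ hx) hs'pos htpos⟩

lemma reachC (n : ℕ) : ∀ s : GState K, s.val.2.2 + n = K → 1 ≤ n → 0 < s.val.2.2 →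
    ∀ τ : GState K, τ.val = (0, 0, K) →
      ∃ t : ℕ, 1 ≤ t ∧ 0 < ((gTrans K p₁ p₂ p₃ x₁ x₂ x₃) ^ t) s τ := by
  induction n with
  | zero => omega
  | succ n ih =>
    intro s hsum hn hpos τ hτ
    have hother : 0 < s.val.1 ∨ 0 < s.val.2.1 := by have := s.2; omega
    obtain ⟨s', hs'1, hs'pos⟩ := stepC hp₁ hp₂ hp₃ hx s hpos hother
    rcases Nat.eq_zero_or_pos n with hn0 | hn1
    · subst hn0
      have hval : s'.val = (0, 0, K) := by
        have e1 : s'.val.2.2 = s.val.2.2 + 1 := hs'1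
        have e2 : s'.val.1 + s'.val.2.1 + s'.val.2.2 = K := s'.2
        have e3 : s'.val = (s'.val.1, s'.val.2.1, s'.val.2.2) := rfl
        rw [e3]
        simp only [Prod.mk.injEq]
        omega
      have hst : s' = τ := Subtype.ext (by rw [hτ, hval])
      refine ⟨1, le_refl 1, ?_⟩
      rw [pow_one, ← hst]
      exact hs'pos
    · obtain ⟨t, ht1, htpos⟩ := ih s' (by have := s'.2; omega) hn1 (by omega) τ hτ
      exact ⟨t + 1, by omega,
        pow_entry_pos_step (gTrans_nonneg hp₁ hp₂ hp₃ hx) hs'pos htpos⟩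

end Aux

/-- In the three-gambler ruin game with total capital `K ≥ 3`, `p₁,p₂,p₃ ∈ (0,1)` and any
stationary strategy profile with values in `[0,1]`, every interior state communicates with
all three terminal states: some power of the transition matrix has a strictly positive
entry joining them. -/
theorem interior_communicates_with_terminals
    (K : ℕ) (hK : 3 ≤ K) (p₁ p₂ p₃ : ℝ)
    (hp₁ : p₁ ∈ Set.Ioo (0 : ℝ) 1) (hp₂ : p₂ ∈ Set.Ioo (0 : ℝ) 1)
    (hp₃ : p₃ ∈ Set.Ioo (0 : ℝ) 1)
    (x₁ x₂ x₃ : ℕ × ℕ × ℕ → ℝ)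
    (hx : ∀ s : ℕ × ℕ × ℕ, 0 < s.1 → 0 < s.2.1 → 0 < s.2.2 →
      x₁ s ∈ Set.Icc (0 : ℝ) 1 ∧ x₂ s ∈ Set.Icc (0 : ℝ) 1 ∧ x₃ s ∈ Set.Icc (0 : ℝ) 1) :
    ∀ s : GState K, 0 < s.val.1 → 0 < s.val.2.1 → 0 < s.val.2.2 →
      ∀ τ : GState K,
        (τ.val = (K, 0, 0) ∨ τ.val = (0, K, 0) ∨ τ.val = (0, 0, K)) →
        ∃ t : ℕ, 1 ≤ t ∧ 0 < ((gTrans K p₁ p₂ p₃ x₁ x₂ x₃) ^ t) s τ := by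
  intro s ha hb hc τ hτ
  have hs := s.2
  rcases hτ with hτ | hτ | hτ
  · exact reachA hp₁ hp₂ hp₃ hx (K - s.val.1) s (by omega) (by omega) ha τ hτ
  · exact reachB hp₁ hp₂ hp₃ hx (K - s.val.2.1) s (by omega) (by omega) hb τ hτ
  · exact reachC hp₁ hp₂ hp₃ hx (K - s.val.2.2) s (by omega) (by omega) hc τ hτ
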